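/- Let (M, E) be an exact category and 𝒫 a pseudo-cluster tilting subcategory of M. Then the quotient category M/𝒫 is a semi-abelian category: it has kernels and cokernels, and for every morphism of M/𝒫 the canonical morphism from its coimage to its image is both an epimorphism and a monomorphism. -/

import Mathlib

open CategoryTheory CategoryTheory.Limits

universe v u

namespace PaperQEC

section QuotientCategory

variable {C : Type u} [Category.{v} C] [Preadditive C]

/-- `f` factors through an object belonging to `P`. -/
def FactorsThru (P : Set C) {X Y : C} (f : X ⟶ Y) : Prop :=
  ∃ Z ∈ P, ∃ (g : X ⟶ Z) (h : Z ⟶ Y), g ≫ h = f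

/-- The subgroup of `Hom(X, Y)` generated by morphisms factoring through an object of `P`
(for `P` closed under finite sums this is just the set of such morphisms). -/
def factorIdeal (P : Set C) (X Y : C) : AddSubgroup (X ⟶ Y) :=
  AddSubgroup.closure {f | FactorsThru P f}

lemma factorIdeal_comp_left (P : Set C) {X Y Z : C} {f : X ⟶ Y}
    (hf : f ∈ factorIdeal P X Y) (g : Y ⟶ Z) : f ≫ g ∈ factorIdeal P X Z := by
  have h : factorIdeal P X Y ≤
      (factorIdeal P X Z).comap (AddMonoidHom.mk' (fun u : X ⟶ Y => u ≫ g)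
        (fun a b => Preadditive.add_comp _ _ _ _ _ _)) := by
    refine (AddSubgroup.closure_le _).mpr ?_
    rintro u ⟨Zp, hZp, a, b, rfl⟩
    exact AddSubgroup.mem_comap.mpr
      (AddSubgroup.subset_closure ⟨Zp, hZp, a, b ≫ g, (Category.assoc _ _ _).symm⟩)
  exact h hf

lemma factorIdeal_comp_right (P : Set C) {X Y Z : C} (f : X ⟶ Y) {g : Y ⟶ Z}
    (hg : g ∈ factorIdeal P Y Z) : f ≫ g ∈ factorIdeal P X Z := by
  have h : factorIdeal P Y Z ≤
      (factorIdeal P X Z).comap (AddMonoidHom.mk' (fun u : Y ⟶ Z => f ≫ u)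
        (fun a b => Preadditive.comp_add _ _ _ _ _ _)) := by
    refine (AddSubgroup.closure_le _).mpr ?_
    rintro u ⟨Zp, hZp, a, b, rfl⟩
    exact AddSubgroup.mem_comap.mpr
      (AddSubgroup.subset_closure ⟨Zp, hZp, f ≫ a, b, Category.assoc _ _ _⟩)
  exact h hg

/-- Objects of the quotient (stable) category `C / P`. -/
structure QuotObj (P : Set C) : Type u where
  obj : C

variable (P : Set C)

instance quotCategory : Category.{v} (QuotObj P) where
  Hom A B := (A.obj ⟶ B.obj) ⧸ factorIdeal P A.obj B.obj
  id A := QuotientAddGroup.mk (𝟙 A.obj)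
  comp {A B D} f g :=
    Quotient.liftOn₂ f g (fun a b => QuotientAddGroup.mk (a ≫ b)) (by
      intro a₁ b₁ a₂ b₂ ha hb
      have ha' : -a₁ + a₂ ∈ factorIdeal P A.obj B.obj := QuotientAddGroup.leftRel_apply.mp ha
      have hb' : -b₁ + b₂ ∈ factorIdeal P B.obj D.obj := QuotientAddGroup.leftRel_apply.mp hb
      refine (QuotientAddGroup.eq (s := factorIdeal P A.obj D.obj)).mpr ?_
      have h1 : (-a₁ + a₂) ≫ b₁ ∈ factorIdeal P A.obj D.obj :=
        factorIdeal_comp_left P ha' b₁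
      have h2 : a₂ ≫ (-b₁ + b₂) ∈ factorIdeal P A.obj D.obj :=
        factorIdeal_comp_right P a₂ hb'
      have h3 := AddSubgroup.add_mem _ h1 h2
      have heq : -(a₁ ≫ b₁) + a₂ ≫ b₂ = (-a₁ + a₂) ≫ b₁ + a₂ ≫ (-b₁ + b₂) := by
        simp only [Preadditive.add_comp, Preadditive.comp_add, Preadditive.neg_comp,
          Preadditive.comp_neg]
        abel
      rw [heq]; exact h3)
  id_comp {A B} f := by
    induction f using Quotient.inductionOn with
    | h a => exact congrArg QuotientAddGroup.mk (Category.id_comp a)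
  comp_id {A B} f := by
    induction f using Quotient.inductionOn with
    | h a => exact congrArg QuotientAddGroup.mk (Category.comp_id a)
  assoc {A B D E} f g h := by
    induction f using Quotient.inductionOn with
    | h a =>
    induction g using Quotient.inductionOn with
    | h b =>
    induction h using Quotient.inductionOn with
    | h c => exact congrArg QuotientAddGroup.mk (Category.assoc a b c)

/-- The image in the quotient category of a morphism of `C`. -/
def qmap {X Y : C} (f : X ⟶ Y) : (QuotObj.mk X : QuotObj P) ⟶ QuotObj.mk Y :=
  QuotientAddGroup.mk f

instance quotPreadditive : Preadditive (QuotObj P) where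
  homGroup A B :=
    inferInstanceAs (AddCommGroup ((A.obj ⟶ B.obj) ⧸ factorIdeal P A.obj B.obj))
  add_comp A B D f f' g := by
    induction f using Quotient.inductionOn with
    | h a =>
    induction f' using Quotient.inductionOn with
    | h a' =>
    induction g using Quotient.inductionOn with
    | h b =>
      show QuotientAddGroup.mk ((a + a') ≫ b) =
        QuotientAddGroup.mk (a ≫ b) + QuotientAddGroup.mk (a' ≫ b)
      rw [Preadditive.add_comp]
      rfl
  comp_add A B D f g g' := by
    induction f using Quotient.inductionOn with
    | h a =>
    induction g using Quotient.inductionOn with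
    | h b =>
    induction g' using Quotient.inductionOn with
    | h b' =>
      show QuotientAddGroup.mk (a ≫ (b + b')) =
        QuotientAddGroup.mk (a ≫ b) + QuotientAddGroup.mk (a ≫ b')
      rw [Preadditive.comp_add]
      rfl

end QuotientCategory

section Exact

variable {C : Type u} [Category.{v} C] [Preadditive C]

/-- `k` is a kernel of `f`. -/
def IsKernelOf {K X Y : C} (k : K ⟶ X) (f : X ⟶ Y) : Prop :=
  k ≫ f = 0 ∧ ∀ {T : C} (g : T ⟶ X), g ≫ f = 0 → ∃! t : T ⟶ K, t ≫ k = g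

/-- `c` is a cokernel of `f`. -/
def IsCokernelOf {X Y Q : C} (c : Y ⟶ Q) (f : X ⟶ Y) : Prop :=
  f ≫ c = 0 ∧ ∀ {T : C} (g : Y ⟶ T), f ≫ g = 0 → ∃! t : Q ⟶ T, c ≫ t = g

/-- A class of composable pairs of morphisms (the prospective conflations). -/
abbrev ConfClass (D : Type*) [Category D] :=
  ∀ ⦃X Y Z : D⦄, (X ⟶ Y) → (Y ⟶ Z) → Prop

/-- A Quillen exact structure on an additive category: a class of kernel–cokernel pairs
(conflations), closed under isomorphisms, containing the identities as inflations and
deflations, with inflations and deflations closed under composition, pushouts of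
inflations and pullbacks of deflations existing and being inflations resp. deflations. -/
structure ExactStructure (D : Type u) [Category.{v} D] [Preadditive D] where
  conf : ConfClass D
  ker_of_conf : ∀ {X Y Z : D} {i : X ⟶ Y} {d : Y ⟶ Z}, conf i d → IsKernelOf i d
  coker_of_conf : ∀ {X Y Z : D} {i : X ⟶ Y} {d : Y ⟶ Z}, conf i d → IsCokernelOf d i
  isoClosed : ∀ {X Y Z X' Y' Z' : D} {i : X ⟶ Y} {d : Y ⟶ Z} {i' : X' ⟶ Y'} {d' : Y' ⟶ Z'}
    (eX : X ≅ X') (eY : Y ≅ Y') (eZ : Z ≅ Z'),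
    i ≫ eY.hom = eX.hom ≫ i' → d ≫ eZ.hom = eY.hom ≫ d' → conf i d → conf i' d'
  id_isInflation : ∀ X : D, ∃ (Z : D) (d : X ⟶ Z), conf (𝟙 X) d
  id_isDeflation : ∀ X : D, ∃ (W : D) (i : W ⟶ X), conf i (𝟙 X)
  infl_comp : ∀ {X Y Z : D} (i : X ⟶ Y) (j : Y ⟶ Z),
    (∃ (W : D) (d : Y ⟶ W), conf i d) → (∃ (W : D) (d : Z ⟶ W), conf j d) →
    ∃ (W : D) (d : Z ⟶ W), conf (i ≫ j) d
  defl_comp : ∀ {X Y Z : D} (p : X ⟶ Y) (q : Y ⟶ Z),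
    (∃ (W : D) (i : W ⟶ X), conf i p) → (∃ (W : D) (i : W ⟶ Y), conf i q) →
    ∃ (W : D) (i : W ⟶ X), conf i (p ≫ q)
  infl_pushout : ∀ {X Y : D} (i : X ⟶ Y), (∃ (W : D) (d : Y ⟶ W), conf i d) →
    ∀ {A : D} (f : X ⟶ A), ∃ (B : D) (i' : A ⟶ B) (g : Y ⟶ B),
      (∃ (W : D) (d : B ⟶ W), conf i' d) ∧ IsPushout i f g i'
  defl_pullback : ∀ {Y Z : D} (p : Y ⟶ Z), (∃ (W : D) (i : W ⟶ Y), conf i p) →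
    ∀ {B : D} (f : B ⟶ Z), ∃ (A : D) (p' : A ⟶ B) (g : A ⟶ Y),
      (∃ (W : D) (i : W ⟶ A), conf i p') ∧ IsPullback g p' p f

/-- `i` is an inflation, i.e. the first map of some conflation. -/
def IsInflation (E : ConfClass C) {X Y : C} (i : X ⟶ Y) : Prop :=
  ∃ (Z : C) (d : Y ⟶ Z), E i d

/-- `d` is a deflation, i.e. the second map of some conflation. -/
def IsDeflation (E : ConfClass C) {Y Z : C} (d : Y ⟶ Z) : Prop :=
  ∃ (X : C) (i : X ⟶ Y), E i d

/-- `P` is a full additive subcategory: nonempty, closed under isomorphisms,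
finite sums and summands. -/
structure IsAddSubcat [HasBinaryBiproducts C] (P : Set C) : Prop where
  nonempty : P.Nonempty
  isoClosed : ∀ {X Y : C}, (X ≅ Y) → X ∈ P → Y ∈ P
  sumClosed : ∀ {X Y : C}, X ∈ P → Y ∈ P → (X ⊞ Y) ∈ P
  summandClosed : ∀ {X Y : C} (s : X ⟶ Y) (r : Y ⟶ X), s ≫ r = 𝟙 X → Y ∈ P → X ∈ P

/-- `f : Q ⟶ X` is a `P`-precover of `X`. -/
def IsPrecover (P : Set C) {Q X : C} (f : Q ⟶ X) : Prop :=
  Q ∈ P ∧ ∀ (Q' : C), Q' ∈ P → ∀ g : Q' ⟶ X, ∃ h : Q' ⟶ Q, h ≫ f = g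

/-- `f : X ⟶ Q` is a `P`-preenvelope of `X`. -/
def IsPreenvelope (P : Set C) {X Q : C} (f : X ⟶ Q) : Prop :=
  Q ∈ P ∧ ∀ (Q' : C), Q' ∈ P → ∀ g : X ⟶ Q', ∃ h : Q ⟶ Q', f ≫ h = g

/-- `P` is strongly contravariantly finite: every object has a `P`-precover
which is a deflation. -/
def StronglyContraFinite (E : ConfClass C) (P : Set C) : Prop :=
  ∀ X : C, ∃ (Q : C) (f : Q ⟶ X), IsPrecover P f ∧ IsDeflation E f

/-- `P` is strongly covariantly finite: every object has a `P`-preenvelope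
which is an inflation. -/
def StronglyCovFinite (E : ConfClass C) (P : Set C) : Prop :=
  ∀ X : C, ∃ (Q : C) (f : X ⟶ Q), IsPreenvelope P f ∧ IsInflation E f

/-- The pair `(i, d)` is `Hom(P,-)`-exact: for every `Q ∈ P`, the sequence
`0 → Hom(Q,X) → Hom(Q,Y) → Hom(Q,Z) → 0` is exact. -/
def HomCovExact (P : Set C) {X Y Z : C} (i : X ⟶ Y) (d : Y ⟶ Z) : Prop :=
  ∀ Q : C, Q ∈ P →
    (∀ g : Q ⟶ X, g ≫ i = 0 → g = 0) ∧
    (∀ u : Q ⟶ Y, u ≫ d = 0 → ∃ g : Q ⟶ X, g ≫ i = u) ∧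
    (∀ h : Q ⟶ Z, ∃ u : Q ⟶ Y, u ≫ d = h)

/-- The pair `(i, d)` is `Hom(-,P)`-exact: for every `Q ∈ P`, the sequence
`0 → Hom(Z,Q) → Hom(Y,Q) → Hom(X,Q) → 0` is exact. -/
def HomContraExact (P : Set C) {X Y Z : C} (i : X ⟶ Y) (d : Y ⟶ Z) : Prop :=
  ∀ Q : C, Q ∈ P →
    (∀ g : Z ⟶ Q, d ≫ g = 0 → g = 0) ∧
    (∀ u : Y ⟶ Q, i ≫ u = 0 → ∃ g : Z ⟶ Q, d ≫ g = u) ∧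
    (∀ h : X ⟶ Q, ∃ u : Y ⟶ Q, i ≫ u = h)

/-- Condition (▲): `P` is strongly covariantly finite and every `X` admits a conflation
`0 → X → Q₀ → Q₁ → 0` with `Q₀, Q₁ ∈ P` whose inflation is a `P`-preenvelope. -/
def CondEnv (E : ConfClass C) (P : Set C) : Prop :=
  StronglyCovFinite E P ∧
  ∀ X : C, ∃ (Q₀ Q₁ : C) (α : X ⟶ Q₀) (q : Q₀ ⟶ Q₁),
    E α q ∧ Q₀ ∈ P ∧ Q₁ ∈ P ∧ IsPreenvelope P α

/-- Condition (▼): `P` is strongly contravariantly finite and every `X` admits a conflation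
`0 → P₁ → P₀ → X → 0` with `P₀, P₁ ∈ P` whose deflation is a `P`-precover. -/
def CondCov (E : ConfClass C) (P : Set C) : Prop :=
  StronglyContraFinite E P ∧
  ∀ X : C, ∃ (P₀ P₁ : C) (i : P₁ ⟶ P₀) (β : P₀ ⟶ X),
    E i β ∧ P₀ ∈ P ∧ P₁ ∈ P ∧ IsPrecover P β

/-- `P` is a pseudo-cluster tilting subcategory. -/
def PseudoClusterTilting (E : ConfClass C) (P : Set C) : Prop :=
  CondEnv E P ∧ CondCov E P

/-- The conflation `(i, d)` splits. -/
def Splits {X Y Z : C} (i : X ⟶ Y) (d : Y ⟶ Z) : Prop :=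
  (∃ r : Y ⟶ X, i ≫ r = 𝟙 X) ∧ ∃ s : Z ⟶ Y, s ≫ d = 𝟙 Z

/-- `P` is self-orthogonal with respect to the class `cl` of conflations: every
conflation in `cl` with both end terms in `P` splits. -/
def SelfOrthWrt (P : Set C) (cl : ConfClass C) : Prop :=
  ∀ ⦃X Y Z : C⦄ (i : X ⟶ Y) (d : Y ⟶ Z), cl i d → X ∈ P → Z ∈ P → Splits i d

/-- `P` is a cluster tilting subcategory: a pseudo-cluster tilting subcategory which is
self-orthogonal with respect to all conflations. -/
def ClusterTilting (E : ConfClass C) (P : Set C) : Prop :=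
  PseudoClusterTilting E P ∧ SelfOrthWrt P E

/-- The class `𝒮` of conflations. -/
def memS (E : ConfClass C) (P : Set C) ⦃S₁ S₂ S₃ : C⦄ (i : S₁ ⟶ S₂) (d : S₂ ⟶ S₃) : Prop :=
  E i d ∧ ∃ (U M₁ M₂ : C) (u₁ : U ⟶ S₁) (p₁ : S₁ ⟶ M₁) (u₂ : U ⟶ S₂) (p₂ : S₂ ⟶ M₂)
    (m : M₁ ⟶ M₂) (q : M₂ ⟶ S₃),
    E u₁ p₁ ∧ E u₂ p₂ ∧ E m q ∧
    HomCovExact P u₂ p₂ ∧ HomContraExact P m q ∧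
    u₁ ≫ i = u₂ ∧ i ≫ p₂ = p₁ ≫ m ∧ d = p₂ ≫ q

/-- The class `𝒯` of conflations. -/
def memT (E : ConfClass C) (P : Set C) ⦃T₁ T₂ T₃ : C⦄ (i : T₁ ⟶ T₂) (d : T₂ ⟶ T₃) : Prop :=
  E i d ∧ ∃ (V N₂ N₃ : C) (n₁ : T₁ ⟶ N₂) (n₂ : N₂ ⟶ N₃) (j₂ : N₂ ⟶ T₂) (v₂ : T₂ ⟶ V)
    (j₃ : N₃ ⟶ T₃) (v₃ : T₃ ⟶ V),
    E n₁ n₂ ∧ E j₂ v₂ ∧ E j₃ v₃ ∧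
    HomCovExact P n₁ n₂ ∧ HomContraExact P j₂ v₂ ∧
    i = n₁ ≫ j₂ ∧ n₂ ≫ j₃ = j₂ ≫ d ∧ d ≫ v₃ = v₂

end Exact

section AbelianDefs

/-- A preadditive category is abelian (in the sense of Definition 2.1 of the paper) if it
has kernels and cokernels and the canonical morphism from the coimage to the image of any
morphism is an isomorphism. -/
def IsAbelianCat (D : Type*) [Category D] [Preadditive D] : Prop :=
  ∃ (hk : HasKernels D) (hc : HasCokernels D),
    ∀ {X Y : D} (f : X ⟶ Y),
      haveI := hk; haveI := hc; IsIso (CategoryTheory.Abelian.coimageImageComparison f)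

/-- A preadditive category is semi-abelian if it has kernels and cokernels and the
canonical morphism from the coimage to the image of any morphism is both an epimorphism
and a monomorphism. -/
def IsSemiAbelianCat (D : Type*) [Category D] [Preadditive D] : Prop :=
  ∃ (hk : HasKernels D) (hc : HasCokernels D),
    ∀ {X Y : D} (f : X ⟶ Y),
      haveI := hk; haveI := hc;
      Mono (CategoryTheory.Abelian.coimageImageComparison f) ∧
      Epi (CategoryTheory.Abelian.coimageImageComparison f)

end AbelianDefs

section ConflationCategory

variable {M : Type u} [Category.{v} M] [Preadditive M]

/-- Objects of the category `E(M)` of conflations: conflations `0 → X₁ → X₂ → X₃ → 0`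
of the exact category `(M, E)`. -/
structure ConfObj (E : ExactStructure M) : Type max u v where
  X₁ : M
  X₂ : M
  X₃ : M
  i : X₁ ⟶ X₂
  d : X₂ ⟶ X₃
  conf : E.conf i d

variable {E : ExactStructure M}

/-- The additive group of morphisms of conflations: triples of morphisms making the two
squares commute. -/
def confHomGroup (A B : ConfObj E) :
    AddSubgroup ((A.X₁ ⟶ B.X₁) × (A.X₂ ⟶ B.X₂) × (A.X₃ ⟶ B.X₃)) where
  carrier := {t | A.i ≫ t.2.1 = t.1 ≫ B.i ∧ A.d ≫ t.2.2 = t.2.1 ≫ B.d}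
  zero_mem' := by simp
  add_mem' := by
    rintro a b ⟨ha₁, ha₂⟩ ⟨hb₁, hb₂⟩
    refine ⟨?_, ?_⟩ <;>
      simp [Preadditive.comp_add, Preadditive.add_comp, ha₁, ha₂, hb₁, hb₂]
  neg_mem' := by
    rintro a ⟨h₁, h₂⟩
    refine ⟨?_, ?_⟩ <;> simp [h₁, h₂]

instance confCategoryStruct : CategoryStruct.{v} (ConfObj E) where
  Hom A B := ↥(confHomGroup A B)
  id A := ⟨(𝟙 _, 𝟙 _, 𝟙 _), by constructor <;> simp⟩
  comp {A B D} f g := ⟨(f.1.1 ≫ g.1.1, f.1.2.1 ≫ g.1.2.1, f.1.2.2 ≫ g.1.2.2), by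
    obtain ⟨hf₁, hf₂⟩ := f.2
    obtain ⟨hg₁, hg₂⟩ := g.2
    constructor
    · rw [← Category.assoc, hf₁, Category.assoc, hg₁, ← Category.assoc]
    · rw [← Category.assoc, hf₂, Category.assoc, hg₂, ← Category.assoc]⟩

/-- Degree `-1` component of a morphism of conflations. -/
def homC₁ {A B : ConfObj E} (f : A ⟶ B) : A.X₁ ⟶ B.X₁ := f.1.1

/-- Degree `0` component of a morphism of conflations. -/
def homC₂ {A B : ConfObj E} (f : A ⟶ B) : A.X₂ ⟶ B.X₂ := f.1.2.1

/-- Degree `1` component of a morphism of conflations. -/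
def homC₃ {A B : ConfObj E} (f : A ⟶ B) : A.X₃ ⟶ B.X₃ := f.1.2.2

lemma confHom_ext {A B : ConfObj E} {f g : A ⟶ B} (h₁ : homC₁ f = homC₁ g)
    (h₂ : homC₂ f = homC₂ g) (h₃ : homC₃ f = homC₃ g) : f = g := by
  apply Subtype.ext
  show (homC₁ f, homC₂ f, homC₃ f) = (homC₁ g, homC₂ g, homC₃ g)
  rw [h₁, h₂, h₃]

@[simp] lemma homC₁_id (A : ConfObj E) : homC₁ (𝟙 A) = 𝟙 A.X₁ := rfl
@[simp] lemma homC₂_id (A : ConfObj E) : homC₂ (𝟙 A) = 𝟙 A.X₂ := rfl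
@[simp] lemma homC₃_id (A : ConfObj E) : homC₃ (𝟙 A) = 𝟙 A.X₃ := rfl
@[simp] lemma homC₁_comp {A B D : ConfObj E} (f : A ⟶ B) (g : B ⟶ D) :
    homC₁ (f ≫ g) = homC₁ f ≫ homC₁ g := rfl
@[simp] lemma homC₂_comp {A B D : ConfObj E} (f : A ⟶ B) (g : B ⟶ D) :
    homC₂ (f ≫ g) = homC₂ f ≫ homC₂ g := rfl
@[simp] lemma homC₃_comp {A B D : ConfObj E} (f : A ⟶ B) (g : B ⟶ D) :
    homC₃ (f ≫ g) = homC₃ f ≫ homC₃ g := rfl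

instance confCategory : Category.{v} (ConfObj E) where
  id_comp f := confHom_ext (by simp) (by simp) (by simp)
  comp_id f := confHom_ext (by simp) (by simp) (by simp)
  assoc f g h := confHom_ext (by simp) (by simp) (by simp)

instance confHomAddCommGroup (A B : ConfObj E) : AddCommGroup (A ⟶ B) :=
  inferInstanceAs (AddCommGroup ↥(confHomGroup A B))

@[simp] lemma homC₁_add {A B : ConfObj E} (f g : A ⟶ B) :
    homC₁ (f + g) = homC₁ f + homC₁ g := rfl
@[simp] lemma homC₂_add {A B : ConfObj E} (f g : A ⟶ B) :
    homC₂ (f + g) = homC₂ f + homC₂ g := rfl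
@[simp] lemma homC₃_add {A B : ConfObj E} (f g : A ⟶ B) :
    homC₃ (f + g) = homC₃ f + homC₃ g := rfl

instance confPreadditive : Preadditive (ConfObj E) where
  homGroup A B := inferInstance
  add_comp A B D f f' g :=
    confHom_ext (by simp [Preadditive.add_comp]) (by simp [Preadditive.add_comp])
      (by simp [Preadditive.add_comp])
  comp_add A B D f g g' :=
    confHom_ext (by simp [Preadditive.comp_add]) (by simp [Preadditive.comp_add])
      (by simp [Preadditive.comp_add])

/-- The degree-wise class of conflations on `E(M)`: a short sequence of conflations is a
conflation if it is a conflation of `M` in each degree. -/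
def degConf (E : ExactStructure M) : ConfClass (ConfObj E) := fun _ _ _ f g =>
  E.conf (homC₁ f) (homC₁ g) ∧ E.conf (homC₂ f) (homC₂ g) ∧ E.conf (homC₃ f) (homC₃ g)

/-- The class `E₀`: degree-wise conflations splitting in degree `0`. -/
def degConf₀ (E : ExactStructure M) : ConfClass (ConfObj E) := fun _ _ _ f g =>
  degConf E f g ∧ Splits (homC₂ f) (homC₂ g)

/-- The class `E₀⁻¹`: degree-wise conflations splitting in degrees `-1` and `0`. -/
def degConf₀neg (E : ExactStructure M) : ConfClass (ConfObj E) := fun _ _ _ f g =>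
  degConf E f g ∧ Splits (homC₁ f) (homC₁ g) ∧ Splits (homC₂ f) (homC₂ g)

/-- The class `E₀¹`: degree-wise conflations splitting in degrees `0` and `1`. -/
def degConf₀pos (E : ExactStructure M) : ConfClass (ConfObj E) := fun _ _ _ f g =>
  degConf E f g ∧ Splits (homC₂ f) (homC₂ g) ∧ Splits (homC₃ f) (homC₃ g)

/-- The full subcategory `S(M)` of `E(M)` consisting of the split conflations. -/
def splitObjs (E : ExactStructure M) : Set (ConfObj E) :=
  {A | Splits A.i A.d}

end ConflationCategory

/-!
Kernels in `M / P` are computed by pulling back a conflation `P₁ → P₀ → Y` whose deflation is a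
`P`-precover, cokernels by pushing out a conflation `X → Q₀ → Q₁` whose inflation is a
`P`-preenvelope. For `f : X ⟶ Y` with such a kernel `k : K ⟶ X`, push out the preenvelope
conflation `K → Q₀ → Q₁` along `k` to get `c : X ⟶ D`, a cokernel of `k` in `M / P`, through which
`f` factors as `c ≫ h`. The pullback of the precover `P₀ → Y` along `h` is again an extension of
`Q₁` by `K`, hence isomorphic to `Q₀` by the short five lemma; so anything whose composite with
`h` factors through `P` already factors through `Q₀`, i.e. `h` is a monomorphism in `M / P`.
Thus the coimage–image comparison of `f` is a monomorphism, and dually an epimorphism.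
-/

section KernelsAndCokernels

variable {A : Type*} [Category A] [Preadditive A]

lemma IsKernelOf.mono {K X Y : A} {k : K ⟶ X} {f : X ⟶ Y} (h : IsKernelOf k f) : Mono k :=
  ⟨fun x y hxy => (h.2 (y ≫ k) (by simp [h.1])).unique hxy rfl⟩

lemma IsCokernelOf.epi {X Y Q : A} {c : Y ⟶ Q} {f : X ⟶ Y} (h : IsCokernelOf c f) : Epi c :=
  ⟨fun x y hxy => (h.2 (c ≫ y) (by simp [reassoc_of% h.1])).unique hxy rfl⟩

noncomputable def IsKernelOf.isLimit {K X Y : A} {k : K ⟶ X} {f : X ⟶ Y} (h : IsKernelOf k f) :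
    IsLimit (KernelFork.ofι k h.1) :=
  KernelFork.IsLimit.ofι k h.1 (fun g hg => (h.2 g hg).exists.choose)
    (fun g hg => (h.2 g hg).exists.choose_spec)
    (fun g hg _ hm => (h.2 g hg).unique hm (h.2 g hg).exists.choose_spec)

noncomputable def IsCokernelOf.isColimit {X Y Q : A} {c : Y ⟶ Q} {f : X ⟶ Y}
    (h : IsCokernelOf c f) : IsColimit (CokernelCofork.ofπ c h.1) :=
  CokernelCofork.IsColimit.ofπ c h.1 (fun g hg => (h.2 g hg).exists.choose)
    (fun g hg => (h.2 g hg).exists.choose_spec)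
    (fun g hg _ hm => (h.2 g hg).unique hm (h.2 g hg).exists.choose_spec)

lemma IsKernelOf.hasKernel {K X Y : A} {k : K ⟶ X} {f : X ⟶ Y} (h : IsKernelOf k f) :
    HasKernel f :=
  HasLimit.mk ⟨_, h.isLimit⟩

lemma IsCokernelOf.hasCokernel {X Y Q : A} {c : Y ⟶ Q} {f : X ⟶ Y} (h : IsCokernelOf c f) :
    HasCokernel f :=
  HasColimit.mk ⟨_, h.isColimit⟩

noncomputable def IsKernelOf.iso {K K' X Y : A} {k : K ⟶ X} {k' : K' ⟶ X} {f : X ⟶ Y}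
    (h : IsKernelOf k f) (h' : IsKernelOf k' f) : K ≅ K' :=
  IsLimit.conePointUniqueUpToIso h.isLimit h'.isLimit

lemma IsKernelOf.iso_hom_comp {K K' X Y : A} {k : K ⟶ X} {k' : K' ⟶ X} {f : X ⟶ Y}
    (h : IsKernelOf k f) (h' : IsKernelOf k' f) : (h.iso h').hom ≫ k' = k :=
  IsLimit.conePointUniqueUpToIso_hom_comp h.isLimit h'.isLimit WalkingParallelPair.zero

noncomputable def IsCokernelOf.iso {X Y Q Q' : A} {c : Y ⟶ Q} {c' : Y ⟶ Q'} {f : X ⟶ Y}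
    (h : IsCokernelOf c f) (h' : IsCokernelOf c' f) : Q ≅ Q' :=
  IsColimit.coconePointUniqueUpToIso h.isColimit h'.isColimit

lemma IsCokernelOf.comp_iso_hom {X Y Q Q' : A} {c : Y ⟶ Q} {c' : Y ⟶ Q'} {f : X ⟶ Y}
    (h : IsCokernelOf c f) (h' : IsCokernelOf c' f) : c ≫ (h.iso h').hom = c' :=
  IsColimit.comp_coconePointUniqueUpToIso_hom h.isColimit h'.isColimit WalkingParallelPair.one

lemma IsKernelOf.of_isPullback {K E X D Q : A} {j : K ⟶ E} {k : K ⟶ X} {e : E ⟶ D}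
    {c : X ⟶ D} {u : D ⟶ Q} (hc : IsKernelOf c u) (hpb : IsPullback j k e c) :
    IsKernelOf j (e ≫ u) := by
  have := hc.mono
  refine ⟨by rw [reassoc_of% hpb.w, hc.1, comp_zero], fun {T} t ht => ?_⟩
  obtain ⟨t', ht', -⟩ := hc.2 (t ≫ e) (by simpa using ht)
  refine ⟨hpb.lift t t' ht'.symm, hpb.lift_fst _ _ _, fun y hy => hpb.hom_ext ?_ ?_⟩
  · simp [hy]
  · rw [← cancel_mono c, hpb.lift_snd, ht', Category.assoc, ← hpb.w, reassoc_of% hy]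

lemma IsCokernelOf.of_isPushout {P X I E D : A} {κ : P ⟶ I} {m : I ⟶ X} {e : I ⟶ E}
    {c : X ⟶ D} {j : E ⟶ D} (hm : IsCokernelOf m κ) (hpo : IsPushout e m j c) :
    IsCokernelOf j (κ ≫ e) := by
  have := hm.epi
  refine ⟨by rw [Category.assoc, hpo.w, reassoc_of% hm.1, zero_comp], fun {T} t ht => ?_⟩
  obtain ⟨t', ht', -⟩ := hm.2 (e ≫ t) (by simpa using ht)
  refine ⟨hpo.desc t t' ht'.symm, hpo.inl_desc _ _ _, fun y hy => hpo.hom_ext ?_ ?_⟩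
  · simp [hy]
  · rw [← cancel_epi m, hpo.inr_desc, ht', ← reassoc_of% hpo.w, hy]

lemma IsKernelOf.lift_of_isPullback {K B Z A' Z' : A} {i : K ⟶ B} {d : B ⟶ Z} {g : A' ⟶ B}
    {p : A' ⟶ Z'} {w : Z' ⟶ Z} (hi : IsKernelOf i d) (hpb : IsPullback g p d w) :
    IsKernelOf (hpb.lift i 0 (by simp [hi.1])) p := by
  have := hi.mono
  refine ⟨hpb.lift_snd _ _ _, fun {T} t ht => ?_⟩
  obtain ⟨τ, hτ, -⟩ := hi.2 (t ≫ g) (by rw [Category.assoc, hpb.w, reassoc_of% ht, zero_comp])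
  refine ⟨τ, hpb.hom_ext (by simp [hτ]) (by simp [ht]), fun y hy => ?_⟩
  rw [← cancel_mono i, hτ, ← hy, Category.assoc, hpb.lift_fst]

lemma IsCokernelOf.desc_of_isPushout {Z B Q Z' A' : A} {i : Z ⟶ B} {d : B ⟶ Q} {w : Z ⟶ Z'}
    {g : B ⟶ A'} {p : Z' ⟶ A'} (hd : IsCokernelOf d i) (hpo : IsPushout i w g p) :
    IsCokernelOf (hpo.desc d 0 (by simp [hd.1])) p := by
  have := hd.epi
  refine ⟨hpo.inr_desc _ _ _, fun {T} t ht => ?_⟩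
  obtain ⟨τ, hτ, -⟩ := hd.2 (g ≫ t) (by rw [← Category.assoc, hpo.w, Category.assoc, ht, comp_zero])
  refine ⟨τ, hpo.hom_ext (by simp [hτ]) (by simp [ht]), fun y hy => ?_⟩
  rw [← cancel_epi d, hτ, ← hy, ← Category.assoc, hpo.inl_desc]

lemma IsKernelOf.exists_retraction {K B Z : A} {κ : K ⟶ B} {p : B ⟶ Z} (h : IsKernelOf κ p)
    {σ : Z ⟶ B} (hσ : σ ≫ p = 𝟙 Z) :
    ∃ r : B ⟶ K, κ ≫ r = 𝟙 K ∧ σ ≫ r = 0 ∧ r ≫ κ + p ≫ σ = 𝟙 B := by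
  have := h.mono
  obtain ⟨r, hr, -⟩ := h.2 (𝟙 B - p ≫ σ) (by simp [hσ])
  refine ⟨r, ?_, ?_, by rw [hr]; abel⟩
  · rw [← cancel_mono κ, Category.assoc, hr]; simp [reassoc_of% h.1]
  · rw [← cancel_mono κ, Category.assoc, hr]; simp [reassoc_of% hσ]

end KernelsAndCokernels

section CoimageImage

variable {A : Type*} [Category A] [Preadditive A]

lemma isKernelOf_kernelι {X Y : A} (f : X ⟶ Y) [HasKernel f] : IsKernelOf (kernel.ι f) f :=
  ⟨kernel.condition f, fun t ht =>
    ⟨kernel.lift f t ht, kernel.lift_ι _ _ _, fun _ hy => equalizer.hom_ext (by simp [hy])⟩⟩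

lemma isCokernelOf_cokernelπ {X Y : A} (f : X ⟶ Y) [HasCokernel f] :
    IsCokernelOf (cokernel.π f) f :=
  ⟨cokernel.condition f, fun t ht =>
    ⟨cokernel.desc f t ht, cokernel.π_desc _ _ _, fun _ hy => coequalizer.hom_ext (by simp [hy])⟩⟩

lemma IsCokernelOf.of_factors {W K X I : A} {g : W ⟶ X} {q : X ⟶ I} (hq : IsCokernelOf q g)
    {k : K ⟶ X} (hk : k ≫ q = 0) (l : W ⟶ K) (hl : l ≫ k = g) : IsCokernelOf q k :=
  ⟨hk, fun t ht => hq.2 t (by rw [← hl, Category.assoc, ht, comp_zero])⟩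

lemma IsKernelOf.of_factors {I X K W : A} {g : X ⟶ W} {m : I ⟶ X} (hm : IsKernelOf m g)
    {c : X ⟶ K} (hc : m ≫ c = 0) (l : K ⟶ W) (hl : c ≫ l = g) : IsKernelOf m c :=
  ⟨hc, fun t ht => hm.2 t (by rw [← hl, ← Category.assoc, ht, zero_comp])⟩

variable [HasKernels A] [HasCokernels A]

lemma mono_coimageImageComparison {X Y I W : A} {f : X ⟶ Y} {q : X ⟶ I} {m : I ⟶ Y}
    {g : W ⟶ X} (hq : IsCokernelOf q g) [Mono m] (hqm : q ≫ m = f) :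
    Mono (Abelian.coimageImageComparison f) := by
  have hgf : g ≫ f = 0 := by rw [← hqm, reassoc_of% hq.1, zero_comp]
  have hq' : IsCokernelOf q (kernel.ι f) :=
    hq.of_factors (by rw [← cancel_mono m, Category.assoc, hqm]; simp) _ (kernel.lift_ι f g hgf)
  let e := (isCokernelOf_cokernelπ (kernel.ι f)).iso hq'
  have key : Abelian.coimageImageComparison f ≫ Abelian.image.ι f = e.hom ≫ m := by
    rw [← cancel_epi (Abelian.coimage.π f), Abelian.coimage_image_factorisation,
      ← Category.assoc, IsCokernelOf.comp_iso_hom, hqm]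
  have : Mono (Abelian.coimageImageComparison f ≫ Abelian.image.ι f) := by
    rw [key]; infer_instance
  exact mono_of_mono _ (Abelian.image.ι f)

lemma epi_coimageImageComparison {X Y I W : A} {f : X ⟶ Y} {e : X ⟶ I} {m : I ⟶ Y}
    {w : Y ⟶ W} (hm : IsKernelOf m w) [Epi e] (hem : e ≫ m = f) :
    Epi (Abelian.coimageImageComparison f) := by
  have hfw : f ≫ w = 0 := by rw [← hem, Category.assoc, hm.1, comp_zero]
  have hm' : IsKernelOf m (cokernel.π f) :=
    hm.of_factors (by rw [← cancel_epi e, reassoc_of% hem]; simp) _ (cokernel.π_desc f w hfw)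
  let i := hm'.iso (isKernelOf_kernelι (cokernel.π f))
  have key : Abelian.coimage.π f ≫ Abelian.coimageImageComparison f = e ≫ i.hom := by
    rw [← cancel_mono (Abelian.image.ι f), Category.assoc, Abelian.coimage_image_factorisation,
      Category.assoc, IsKernelOf.iso_hom_comp, hem]
  have : Epi (Abelian.coimage.π f ≫ Abelian.coimageImageComparison f) := by
    rw [key]; infer_instance
  exact epi_of_epi (Abelian.coimage.π f) _

end CoimageImage

section QuotientMorphisms

variable {C : Type u} [Category.{v} C] {P : Set C}

lemma factorsThru_of_mem_left {X Y : C} (hX : X ∈ P) (f : X ⟶ Y) : FactorsThru P f :=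
  ⟨X, hX, 𝟙 X, f, Category.id_comp f⟩

lemma factorsThru_of_mem_right {X Y : C} (hY : Y ∈ P) (f : X ⟶ Y) : FactorsThru P f :=
  ⟨Y, hY, f, 𝟙 Y, Category.comp_id f⟩

variable [Preadditive C]

lemma FactorsThru.neg {X Y : C} {f : X ⟶ Y} (h : FactorsThru P f) : FactorsThru P (-f) := by
  obtain ⟨Z, hZ, g, k, rfl⟩ := h
  exact ⟨Z, hZ, -g, k, by simp⟩

lemma FactorsThru.add [HasBinaryBiproducts C] (hP : IsAddSubcat P) {X Y : C} {f₁ f₂ : X ⟶ Y}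
    (h₁ : FactorsThru P f₁) (h₂ : FactorsThru P f₂) : FactorsThru P (f₁ + f₂) := by
  obtain ⟨Z₁, hZ₁, g₁, k₁, rfl⟩ := h₁
  obtain ⟨Z₂, hZ₂, g₂, k₂, rfl⟩ := h₂
  exact ⟨Z₁ ⊞ Z₂, hP.sumClosed hZ₁ hZ₂, biprod.lift g₁ g₂, biprod.desc k₁ k₂, by simp⟩

lemma mem_factorIdeal_iff [HasBinaryBiproducts C] (hP : IsAddSubcat P) {X Y : C} (f : X ⟶ Y) :
    f ∈ factorIdeal P X Y ↔ FactorsThru P f := by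
  let S : AddSubgroup (X ⟶ Y) :=
    { carrier := {g | FactorsThru P g}
      zero_mem' := ⟨_, hP.nonempty.some_mem, 0, 0, zero_comp⟩
      add_mem' := FactorsThru.add hP
      neg_mem' := FactorsThru.neg }
  exact ⟨fun hf => (AddSubgroup.closure_le S).mpr le_rfl hf, fun h => AddSubgroup.subset_closure h⟩

lemma qmap_comp {X Y Z : C} (f : X ⟶ Y) (g : Y ⟶ Z) :
    qmap P (f ≫ g) = qmap P f ≫ qmap P g := rfl

lemma qmap_surjective {A B : QuotObj P} (φ : A ⟶ B) : ∃ f : A.obj ⟶ B.obj, qmap P f = φ :=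
  Quotient.exists_rep φ

variable [HasBinaryBiproducts C]

lemma qmap_eq_zero_iff (hP : IsAddSubcat P) {X Y : C} {f : X ⟶ Y} :
    qmap P f = 0 ↔ FactorsThru P f :=
  (QuotientAddGroup.eq_zero_iff f).trans (mem_factorIdeal_iff hP f)

lemma mono_qmap_of_factorsThru (hP : IsAddSubcat P) {Z W : C} (h : Z ⟶ W)
    (hyp : ∀ (T : C) (s : T ⟶ Z), FactorsThru P (s ≫ h) → FactorsThru P s) :
    Mono (qmap P h) :=
  Preadditive.mono_of_cancel_zero _ fun {T} u hu => by
    obtain ⟨s, rfl⟩ := qmap_surjective u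
    rw [← qmap_comp, qmap_eq_zero_iff hP] at hu
    exact (qmap_eq_zero_iff hP).mpr (hyp _ s hu)

lemma epi_qmap_of_factorsThru (hP : IsAddSubcat P) {Z W : C} (h : Z ⟶ W)
    (hyp : ∀ (T : C) (s : W ⟶ T), FactorsThru P (h ≫ s) → FactorsThru P s) :
    Epi (qmap P h) :=
  Preadditive.epi_of_cancel_zero _ fun {T} u hu => by
    obtain ⟨s, rfl⟩ := qmap_surjective u
    rw [← qmap_comp, qmap_eq_zero_iff hP] at hu
    exact (qmap_eq_zero_iff hP).mpr (hyp _ s hu)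

end QuotientMorphisms

section Approximations

variable {C : Type u} [Category.{v} C] {P : Set C}

lemma IsPrecover.exists_lift_of_isPullback {P₀ Y X K T : C} {p : P₀ ⟶ Y} (hp : IsPrecover P p)
    {w : X ⟶ Y} {k : K ⟶ X} {π : K ⟶ P₀} (hpb : IsPullback π k p w) (t : T ⟶ X)
    (ht : FactorsThru P (t ≫ w)) : ∃ s : T ⟶ K, s ≫ k = t := by
  obtain ⟨Q, hQ, x, y, hxy⟩ := ht
  obtain ⟨y', hy'⟩ := hp.2 Q hQ y
  exact ⟨hpb.lift (x ≫ y') t (by rw [Category.assoc, hy', hxy]), hpb.lift_snd _ _ _⟩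

lemma IsPreenvelope.exists_desc_of_isPushout {X Q₀ Z D T : C} {a : X ⟶ Q₀}
    (ha : IsPreenvelope P a) {w : X ⟶ Z} {c : Z ⟶ D} {g : Q₀ ⟶ D} (hpo : IsPushout a w g c)
    (t : Z ⟶ T) (ht : FactorsThru P (w ≫ t)) : ∃ s : D ⟶ T, c ≫ s = t := by
  obtain ⟨Q, hQ, x, y, hxy⟩ := ht
  obtain ⟨x', hx'⟩ := ha.2 Q hQ x
  exact ⟨hpo.desc (x' ≫ y) t (by rw [← Category.assoc, hx', hxy]), hpo.inr_desc _ _ _⟩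

variable [Preadditive C] [HasBinaryBiproducts C]

lemma isKernelOf_qmap_of_isPullback (hP : IsAddSubcat P) {P₁ P₀ Y X K : C} {ι : P₁ ⟶ P₀}
    {p : P₀ ⟶ Y} (hι : IsKernelOf ι p) (hP₁ : P₁ ∈ P) (hp : IsPrecover P p) {f : X ⟶ Y}
    {k : K ⟶ X} {π : K ⟶ P₀} (hpb : IsPullback π k p f) :
    IsKernelOf (qmap P k) (qmap P f) := by
  have hκ := hι.lift_of_isPullback hpb
  have : Mono (qmap P k) := mono_qmap_of_factorsThru hP k fun T s ⟨Q, hQ, x, y, hxy⟩ => by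
    obtain ⟨y', hy'⟩ := hp.exists_lift_of_isPullback hpb y (factorsThru_of_mem_left hQ _)
    obtain ⟨d, hd, -⟩ := hκ.2 (s - x ≫ y') (by simp [hy', hxy])
    rw [← sub_add_cancel s (x ≫ y'), ← hd]
    exact FactorsThru.add hP ⟨P₁, hP₁, d, _, rfl⟩ ⟨Q, hQ, x, y', rfl⟩
  refine ⟨?_, fun {T} t ht => ?_⟩
  · rw [← qmap_comp, ← hpb.w, qmap_eq_zero_iff hP]
    exact ⟨P₀, hp.1, π, p, rfl⟩
  obtain ⟨t, rfl⟩ := qmap_surjective t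
  rw [← qmap_comp, qmap_eq_zero_iff hP] at ht
  obtain ⟨s, hs⟩ := hp.exists_lift_of_isPullback hpb t ht
  refine ⟨qmap P s, ?_, fun y hy => (cancel_mono (qmap P k)).mp ?_⟩
  · dsimp only
    rw [← qmap_comp, hs]
  · rw [hy, ← qmap_comp, hs]

lemma isCokernelOf_qmap_of_isPushout (hP : IsAddSubcat P) {X Q₀ Q₁ Z D : C} {a : X ⟶ Q₀}
    {q : Q₀ ⟶ Q₁} (hq : IsCokernelOf q a) (hQ₁ : Q₁ ∈ P) (ha : IsPreenvelope P a) {f : X ⟶ Z}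
    {c : Z ⟶ D} {g : Q₀ ⟶ D} (hpo : IsPushout a f g c) :
    IsCokernelOf (qmap P c) (qmap P f) := by
  have hu := hq.desc_of_isPushout hpo
  have : Epi (qmap P c) := epi_qmap_of_factorsThru hP c fun T s ⟨Q, hQ, x, y, hxy⟩ => by
    obtain ⟨x', hx'⟩ := ha.exists_desc_of_isPushout hpo x (factorsThru_of_mem_right hQ _)
    obtain ⟨d, hd, -⟩ := hu.2 (s - x' ≫ y) (by simp [reassoc_of% hx', hxy])
    rw [← sub_add_cancel s (x' ≫ y), ← hd]
    exact FactorsThru.add hP ⟨Q₁, hQ₁, _, d, rfl⟩ ⟨Q, hQ, x', y, rfl⟩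
  refine ⟨?_, fun {T} t ht => ?_⟩
  · rw [← qmap_comp, ← hpo.w, qmap_eq_zero_iff hP]
    exact ⟨Q₀, ha.1, a, g, rfl⟩
  obtain ⟨t, rfl⟩ := qmap_surjective t
  rw [← qmap_comp, qmap_eq_zero_iff hP] at ht
  obtain ⟨s, hs⟩ := ha.exists_desc_of_isPushout hpo t ht
  refine ⟨qmap P s, ?_, fun y hy => (cancel_epi (qmap P c)).mp ?_⟩
  · dsimp only
    rw [← qmap_comp, hs]
  · rw [hy, ← qmap_comp, hs]

lemma mono_qmap_of_isPullback (hP : IsAddSubcat P) {Q P₀ D Y : C} (hQ : Q ∈ P) {p : P₀ ⟶ Y}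
    (hp : IsPrecover P p) {h : D ⟶ Y} {π : Q ⟶ P₀} {g : Q ⟶ D} (hpb : IsPullback π g p h) :
    Mono (qmap P h) :=
  mono_qmap_of_factorsThru hP h fun _ s hs => by
    obtain ⟨w, rfl⟩ := hp.exists_lift_of_isPullback hpb s hs
    exact ⟨Q, hQ, w, g, rfl⟩

lemma epi_qmap_of_isPushout (hP : IsAddSubcat P) {X Q₀ I Q : C} (hQ : Q ∈ P) {a : X ⟶ Q₀}
    (ha : IsPreenvelope P a) {h : X ⟶ I} {g : Q₀ ⟶ Q} {π : I ⟶ Q} (hpo : IsPushout a h g π) :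
    Epi (qmap P h) :=
  epi_qmap_of_factorsThru hP h fun _ s hs => by
    obtain ⟨w, rfl⟩ := ha.exists_desc_of_isPushout hpo s hs
    exact ⟨Q, hQ, π, w, rfl⟩

end Approximations

namespace ExactStructure

variable {M : Type u} [Category.{v} M] [Preadditive M] (E : ExactStructure M)

lemma conf_of_isKernelOf {K K' Y Z : M} {i : K ⟶ Y} {d : Y ⟶ Z} (hconf : E.conf i d)
    {j : K' ⟶ Y} (hj : IsKernelOf j d) : E.conf j d :=
  E.isoClosed ((E.ker_of_conf hconf).iso hj) (Iso.refl _) (Iso.refl _)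
    (by simp [IsKernelOf.iso_hom_comp]) (by simp) hconf

lemma conf_of_isCokernelOf {X Y Z Z' : M} {i : X ⟶ Y} {d : Y ⟶ Z} (hconf : E.conf i d)
    {u : Y ⟶ Z'} (hu : IsCokernelOf u i) : E.conf i u :=
  E.isoClosed (Iso.refl _) (Iso.refl _) ((E.coker_of_conf hconf).iso hu)
    (by simp) (by simp [IsCokernelOf.comp_iso_hom]) hconf

lemma isDeflation_of_isPullback {Y Z A B : M} {d : Y ⟶ Z} (hd : IsDeflation E.conf d)
    {w : B ⟶ Z} {g : A ⟶ Y} {p : A ⟶ B} (hpb : IsPullback g p d w) : IsDeflation E.conf p := by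
  obtain ⟨A₂, p₂, g₂, ⟨W, i₂, hconf⟩, hpb₂⟩ := E.defl_pullback d hd w
  let e := hpb₂.isoIsPullback _ _ hpb
  exact ⟨W, i₂ ≫ e.hom, E.isoClosed (Iso.refl _) e (Iso.refl _) (by simp) (by simp [e]) hconf⟩

lemma isInflation_of_isPushout {X Y A B : M} {i : X ⟶ Y} (hi : IsInflation E.conf i)
    {w : X ⟶ B} {g : Y ⟶ A} {p : B ⟶ A} (hpo : IsPushout i w g p) : IsInflation E.conf p := by
  obtain ⟨A₂, p₂, g₂, ⟨W, d₂, hconf⟩, hpo₂⟩ := E.infl_pushout i hi w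
  let e := hpo₂.isoIsPushout _ _ hpo
  exact ⟨W, e.inv ≫ d₂, E.isoClosed (Iso.refl _) e (Iso.refl _) (by simp [e]) (by simp) hconf⟩

lemma conf_of_isPullback {K Y Z A B : M} {i : K ⟶ Y} {d : Y ⟶ Z} (hconf : E.conf i d)
    {w : B ⟶ Z} {g : A ⟶ Y} {p : A ⟶ B} (hpb : IsPullback g p d w) :
    E.conf (hpb.lift i 0 (by simp [(E.ker_of_conf hconf).1])) p := by
  obtain ⟨_, _, hconf'⟩ := E.isDeflation_of_isPullback ⟨_, _, hconf⟩ hpb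
  exact E.conf_of_isKernelOf hconf' ((E.ker_of_conf hconf).lift_of_isPullback hpb)

lemma conf_of_isPushout {X Y Z A B : M} {i : X ⟶ Y} {d : Y ⟶ Z} (hconf : E.conf i d)
    {w : X ⟶ B} {g : Y ⟶ A} {p : B ⟶ A} (hpo : IsPushout i w g p) :
    E.conf p (hpo.desc d 0 (by simp [(E.ker_of_conf hconf).1])) := by
  obtain ⟨_, _, hconf'⟩ := E.isInflation_of_isPushout ⟨_, _, hconf⟩ hpo
  exact E.conf_of_isCokernelOf hconf' ((E.coker_of_conf hconf).desc_of_isPushout hpo)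

/-- The short five lemma. -/
lemma isIso_of_conf {K Q Q' Z : M} {a : K ⟶ Q} {q : Q ⟶ Z} {j : K ⟶ Q'} {v : Q' ⟶ Z}
    (h₁ : E.conf a q) (h₂ : E.conf j v) {m : Q ⟶ Q'} (ha : a ≫ m = j) (hq : m ≫ v = q) :
    IsIso m := by
  -- `A = Q' ×_Z Q` carries the conflations `K → A → Q`, split by `m`, and `K → A → Q'`;
  -- comparing the two inverts `m`.
  obtain ⟨A, pA, gA, -, hpb⟩ := E.defl_pullback v ⟨_, _, h₂⟩ q
  have hκ := E.ker_of_conf (E.conf_of_isPullback h₂ hpb)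
  have hl := E.coker_of_conf (E.conf_of_isPullback h₁ hpb.flip)
  set κ := hpb.lift j 0 (by simp [(E.ker_of_conf h₂).1])
  set l := hpb.flip.lift a 0 (by simp [(E.ker_of_conf h₁).1])
  set σ := hpb.lift m (𝟙 Q) (by simp [hq])
  obtain ⟨r, -, hσr, hsplit⟩ := hκ.exists_retraction (hpb.lift_snd m (𝟙 Q) _)
  have := (E.ker_of_conf h₂).mono
  have := hl.epi
  have hlr : l ≫ r = -𝟙 K := by
    refine eq_neg_of_add_eq_zero_left ((cancel_mono j).mp ?_)
    calc (l ≫ r + 𝟙 K) ≫ j = l ≫ (r ≫ κ + pA ≫ σ) ≫ gA := by simp [σ, κ, l, ha]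
      _ = 0 ≫ j := by rw [hsplit, Category.id_comp, hl.1, zero_comp]
  obtain ⟨n, hn, -⟩ := hl.2 (pA + r ≫ a) (by simp [l, reassoc_of% hlr])
  refine ⟨n, ?_, ?_⟩
  · calc m ≫ n = σ ≫ gA ≫ n := by simp [σ]
      _ = 𝟙 Q := by simp [hn, reassoc_of% hσr, σ]
  · rw [← cancel_epi gA]
    calc gA ≫ n ≫ m = (r ≫ κ + pA ≫ σ) ≫ gA := by simp [reassoc_of% hn, ha, κ, σ, add_comm]
      _ = gA ≫ 𝟙 Q' := by rw [hsplit, Category.id_comp, Category.comp_id]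

end ExactStructure

section QuotientFactorizations

variable {M : Type u} [Category.{v} M] [Preadditive M] (E : ExactStructure M)

/-- The comparison map from `Q₀` to the pullback of `p` along `h` is an isomorphism by the short
five lemma, both objects being extensions of `Q₁` by `K`. -/
lemma isPullback_of_isPushout_of_isPullback {P₁ P₀ X Y K Q₀ Q₁ D : M} {ι : P₁ ⟶ P₀}
    {p : P₀ ⟶ Y} (hconfp : E.conf ι p) {f : X ⟶ Y} {k : K ⟶ X} {π : K ⟶ P₀}
    (hpb : IsPullback π k p f) {a : K ⟶ Q₀} {q : Q₀ ⟶ Q₁} (hconfa : E.conf a q) {g : Q₀ ⟶ D}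
    {c : X ⟶ D} (hpo : IsPushout a k g c) {π' : Q₀ ⟶ P₀} (hπ' : a ≫ π' = π) {h : D ⟶ Y}
    (hg : g ≫ h = π' ≫ p) (hc : c ≫ h = f) : IsPullback π' g p h := by
  obtain ⟨E', e, ρ, he, hpbE⟩ := E.defl_pullback p ⟨_, _, hconfp⟩ h
  have hpbK := IsPullback.of_right' (hc ▸ hpb) hpbE
  set j := hpbE.lift π (k ≫ c) _
  have hcu := E.conf_of_isPushout hconfa hpo
  have hconfj : E.conf j (e ≫ hpo.desc q 0 (by simp [(E.ker_of_conf hconfa).1])) := by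
    obtain ⟨_, _, hv⟩ := E.defl_comp e _ he ⟨_, _, hcu⟩
    exact E.conf_of_isKernelOf hv ((E.ker_of_conf hcu).of_isPullback hpbK)
  let m := hpbE.lift π' g hg.symm
  have : IsIso m := E.isIso_of_conf hconfa hconfj
    (hpbE.hom_ext (by simp [m, j, hπ']) (by simp [m, j, hpo.w])) (by simp [m])
  exact hpbE.of_iso' (asIso m) (Iso.refl _) (Iso.refl _) (Iso.refl _)
    (by simp [m]) (by simp [m]) (by simp) (by simp)

lemma isPushout_of_isPullback_of_isPushout {X Y Q₀ Q₁ C' P₁ P₀ I : M} {a : X ⟶ Q₀}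
    {q : Q₀ ⟶ Q₁} (hconfa : E.conf a q) {f : X ⟶ Y} {g : Q₀ ⟶ C'} {c : Y ⟶ C'}
    (hpo : IsPushout a f g c) {ι : P₁ ⟶ P₀} {p : P₀ ⟶ C'} (hconfp : E.conf ι p) {π : I ⟶ P₀}
    {m : I ⟶ Y} (hpb : IsPullback π m p c) {g' : Q₀ ⟶ P₀} (hg' : g' ≫ p = g) {h : X ⟶ I}
    (hπ : h ≫ π = a ≫ g') (hm : h ≫ m = f) : IsPushout a h g' π := by
  obtain ⟨E', e, gE, he, hpoE⟩ := E.infl_pushout a ⟨_, _, hconfa⟩ h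
  have hpoC := IsPushout.of_top' (hm ▸ hpo) hpoE
  set j := hpoE.desc g (m ≫ c) _
  have hκm := E.conf_of_isPullback hconfp hpb
  have hconfj : E.conf (hpb.lift ι 0 (by simp [(E.ker_of_conf hconfp).1]) ≫ e) j := by
    obtain ⟨_, _, hv⟩ := E.infl_comp _ e ⟨_, _, hκm⟩ he
    exact E.conf_of_isCokernelOf hv ((E.coker_of_conf hκm).of_isPushout hpoC)
  let n := hpoE.desc g' π hπ.symm
  have : IsIso n := E.isIso_of_conf hconfj hconfp (by simp [n])
    (hpoE.hom_ext (by simp [n, j, hg']) (by simp [n, j, hpb.w]))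
  exact hpoE.of_iso (Iso.refl _) (Iso.refl _) (Iso.refl _) (asIso n)
    (by simp) (by simp) (by simp [n]) (by simp [n])

variable [HasBinaryBiproducts M] {P : Set M}

lemma exists_kernel_coimage_mono_factorization (hP : IsAddSubcat P)
    (hpct : PseudoClusterTilting E.conf P) {X Y : M} (f : X ⟶ Y) :
    ∃ (K D : M) (k : K ⟶ X) (c : X ⟶ D) (h : D ⟶ Y),
      IsKernelOf (qmap P k) (qmap P f) ∧ IsCokernelOf (qmap P c) (qmap P k) ∧
      qmap P c ≫ qmap P h = qmap P f ∧ Mono (qmap P h) := by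
  obtain ⟨P₀, P₁, ι, p, hconfp, hP₀, hP₁, hp⟩ := hpct.2.2 Y
  obtain ⟨K, k, π, -, hpb⟩ := E.defl_pullback p ⟨_, _, hconfp⟩ f
  obtain ⟨Q₀, Q₁, a, q, hconfa, hQ₀, hQ₁, ha⟩ := hpct.1.2 K
  obtain ⟨D, c, g, -, hpo⟩ := E.infl_pushout a ⟨_, _, hconfa⟩ k
  obtain ⟨π', hπ'⟩ := ha.2 P₀ hP₀ π
  let h := hpo.desc (π' ≫ p) f (by rw [reassoc_of% hπ', hpb.w])
  have hch : c ≫ h = f := hpo.inr_desc _ _ _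
  refine ⟨K, D, k, c, h, isKernelOf_qmap_of_isPullback hP (E.ker_of_conf hconfp) hP₁ hp hpb,
    isCokernelOf_qmap_of_isPushout hP (E.coker_of_conf hconfa) hQ₁ ha hpo,
    by rw [← qmap_comp, hch], mono_qmap_of_isPullback hP hQ₀ hp
      (isPullback_of_isPushout_of_isPullback E hconfp hpb hconfa hpo hπ' (hpo.inl_desc _ _ _) hch)⟩

lemma exists_cokernel_image_epi_factorization (hP : IsAddSubcat P)
    (hpct : PseudoClusterTilting E.conf P) {X Y : M} (f : X ⟶ Y) :
    ∃ (C' I : M) (c : Y ⟶ C') (m : I ⟶ Y) (h : X ⟶ I),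
      IsCokernelOf (qmap P c) (qmap P f) ∧ IsKernelOf (qmap P m) (qmap P c) ∧
      qmap P h ≫ qmap P m = qmap P f ∧ Epi (qmap P h) := by
  obtain ⟨Q₀, Q₁, a, q, hconfa, hQ₀, hQ₁, ha⟩ := hpct.1.2 X
  obtain ⟨C', c, g, -, hpo⟩ := E.infl_pushout a ⟨_, _, hconfa⟩ f
  obtain ⟨P₀, P₁, ι, p, hconfp, hP₀, hP₁, hp⟩ := hpct.2.2 C'
  obtain ⟨I, m, π, -, hpb⟩ := E.defl_pullback p ⟨_, _, hconfp⟩ c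
  obtain ⟨g', hg'⟩ := hp.2 Q₀ hQ₀ g
  let h := hpb.lift (a ≫ g') f (by rw [Category.assoc, hg', hpo.w])
  have hhm : h ≫ m = f := hpb.lift_snd _ _ _
  refine ⟨C', I, c, m, h, isCokernelOf_qmap_of_isPushout hP (E.coker_of_conf hconfa) hQ₁ ha hpo,
    isKernelOf_qmap_of_isPullback hP (E.ker_of_conf hconfp) hP₁ hp hpb,
    by rw [← qmap_comp, hhm], epi_qmap_of_isPushout hP hP₀ ha
      (isPushout_of_isPullback_of_isPushout E hconfa hpo hconfp hpb hg' (hpb.lift_fst _ _ _) hhm)⟩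

end QuotientFactorizations

/-- the quotient of an exact category by a pseudo-cluster tilting
subcategory is semi-abelian. -/
theorem quotient_semiAbelian {M : Type u} [Category.{v} M] [Preadditive M]
    [HasBinaryBiproducts M] (E : ExactStructure M) (P : Set M) (hP : IsAddSubcat P)
    (h : PseudoClusterTilting E.conf P) :
    IsSemiAbelianCat (QuotObj P) := by
  have hasKernels : HasKernels (QuotObj P) := ⟨fun φ => by
    obtain ⟨f, rfl⟩ := qmap_surjective φ
    obtain ⟨_, _, _, _, _, hk, -⟩ := exists_kernel_coimage_mono_factorization E hP h f
    exact hk.hasKernel⟩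
  have hasCokernels : HasCokernels (QuotObj P) := ⟨fun φ => by
    obtain ⟨f, rfl⟩ := qmap_surjective φ
    obtain ⟨_, _, _, _, _, hc, -⟩ := exists_cokernel_image_epi_factorization E hP h f
    exact hc.hasCokernel⟩
  refine ⟨hasKernels, hasCokernels, fun φ => ?_⟩
  obtain ⟨f, rfl⟩ := qmap_surjective φ
  obtain ⟨_, _, _, _, _, -, hc, hcoim, _⟩ := exists_kernel_coimage_mono_factorization E hP h f
  obtain ⟨_, _, _, _, _, -, hk, him, _⟩ := exists_cokernel_image_epi_factorization E hP h f
  exact ⟨mono_coimageImageComparison hc hcoim, epi_coimageImageComparison hk him⟩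

end PaperQEC
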